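/- Let Ω ⊆ ℝⁿ be open and let (Aₘ)_{m∈ℕ} be an increasing sequence of subsets of Ω (Aₘ ⊆ A_{m+1} for all m). Then lim_{m→∞} cap_{p,ϑ}(Aₘ, Ω) = cap_{p,ϑ}(⋃_{m=1}^∞ Aₘ, Ω). -/

import Mathlib

open MeasureTheory Metric Set Filter ENNReal

noncomputable section

/-- The weighted variable exponent modular `ρ_{p,ϑ,A}(g) = ∫_A |g|^{p(x)} ϑ(x) dx`. -/
def rhoMod {n : ℕ} (p ϑ : EuclideanSpace ℝ (Fin n) → ℝ)
    (A : Set (EuclideanSpace ℝ (Fin n))) (g : EuclideanSpace ℝ (Fin n) → ℝ) : ℝ≥0∞ :=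
  ∫⁻ x in A, ENNReal.ofReal (|g x| ^ p x * ϑ x)

/-- Relative `(p(·),ϑ)`-capacity of a compact set `K` with respect to an open set `Ω`:
the infimum of `ρ_{p,ϑ,Ω}(‖Df‖)` over `C¹` functions with compact support contained in `Ω`
which are `≥ 1` on `K` (with `sInf ∅ = ∞`). -/
def relCapK {n : ℕ} (p ϑ : EuclideanSpace ℝ (Fin n) → ℝ)
    (K Ω : Set (EuclideanSpace ℝ (Fin n))) : ℝ≥0∞ :=
  sInf ((fun f => rhoMod p ϑ Ω fun x => ‖fderiv ℝ f x‖) ''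
    {f : EuclideanSpace ℝ (Fin n) → ℝ |
      ContDiff ℝ 1 f ∧ IsCompact (tsupport f) ∧ tsupport f ⊆ Ω ∧ ∀ x ∈ K, 1 ≤ f x})

/-- Relative capacity of an open subset `U ⊆ Ω`. -/
def relCapO {n : ℕ} (p ϑ : EuclideanSpace ℝ (Fin n) → ℝ)
    (U Ω : Set (EuclideanSpace ℝ (Fin n))) : ℝ≥0∞ :=
  ⨆ (K : Set (EuclideanSpace ℝ (Fin n))) (_ : IsCompact K ∧ K ⊆ U), relCapK p ϑ K Ω

/-- Relative capacity of an arbitrary subset `A ⊆ Ω`. -/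
def relCap {n : ℕ} (p ϑ : EuclideanSpace ℝ (Fin n) → ℝ)
    (A Ω : Set (EuclideanSpace ℝ (Fin n))) : ℝ≥0∞ :=
  ⨅ (U : Set (EuclideanSpace ℝ (Fin n))) (_ : IsOpen U ∧ A ⊆ U ∧ U ⊆ Ω), relCapO p ϑ U Ω

/-- The Sobolev `(p(·),ϑ)`-capacity of `A ⊆ ℝⁿ`. -/
def sobCap {n : ℕ} (p ϑ : EuclideanSpace ℝ (Fin n) → ℝ)
    (A : Set (EuclideanSpace ℝ (Fin n))) : ℝ≥0∞ :=
  sInf ((fun f => ∫⁻ x, ENNReal.ofReal ((|f x| ^ p x + ‖fderiv ℝ f x‖ ^ p x) * ϑ x)) ''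
    {f : EuclideanSpace ℝ (Fin n) → ℝ |
      ContDiff ℝ 1 f ∧ ∃ U, IsOpen U ∧ A ⊆ U ∧ ∀ x ∈ U, 1 ≤ f x})

/-- The weighted measure `μ_ϑ(A) = ∫_A ϑ(x) dx`. -/
def muW {n : ℕ} (ϑ : EuclideanSpace ℝ (Fin n) → ℝ)
    (A : Set (EuclideanSpace ℝ (Fin n))) : ℝ≥0∞ :=
  ∫⁻ x in A, ENNReal.ofReal (ϑ x)

/-- `μ_ϑ` is doubling with constant `cd`. -/
def DoublingW {n : ℕ} (ϑ : EuclideanSpace ℝ (Fin n) → ℝ) (cd : ℝ) : Prop :=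
  1 ≤ cd ∧ ∀ (x : EuclideanSpace ℝ (Fin n)) (r : ℝ), 0 < r →
    muW ϑ (ball x (2 * r)) ≤ ENNReal.ofReal cd * muW ϑ (ball x r)

/-- Poincaré hypothesis with constant `c` for the weight `ϑ`. -/
def PoincareHyp {n : ℕ} (ϑ : EuclideanSpace ℝ (Fin n) → ℝ) (c : ℝ) : Prop :=
  ∀ Ω : Set (EuclideanSpace ℝ (Fin n)), IsOpen Ω → Bornology.IsBounded Ω →
    ∀ f : EuclideanSpace ℝ (Fin n) → ℝ, ContDiff ℝ 1 f → IsCompact (tsupport f) →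
      tsupport f ⊆ Ω →
      ∫ x in Ω, |f x| * ϑ x ≤ c * diam Ω * ∫ x in Ω, ‖fderiv ℝ f x‖ * ϑ x

/-- Embedding hypothesis `L^{p(·)}_ϑ(Ω) ↪ L¹_ϑ(Ω)` with constants `c₁ Ω`. -/
def EmbeddingHyp {n : ℕ} (p ϑ : EuclideanSpace ℝ (Fin n) → ℝ)
    (c₁ : Set (EuclideanSpace ℝ (Fin n)) → ℝ) : Prop :=
  ∀ Ω : Set (EuclideanSpace ℝ (Fin n)), IsOpen Ω → Bornology.IsBounded Ω →
    0 < c₁ Ω ∧ ∀ g : EuclideanSpace ℝ (Fin n) → ℝ, Measurable g → 1 ≤ rhoMod p ϑ Ω g →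
      (∫⁻ x in Ω, ENNReal.ofReal (|g x| * ϑ x)) ≤ ENNReal.ofReal (c₁ Ω) * rhoMod p ϑ Ω g

/-- The Wiener sum `W^{sum}_{p,ϑ}(A,x₀)`. -/
def wienerSum {n : ℕ} (p ϑ : EuclideanSpace ℝ (Fin n) → ℝ)
    (A : Set (EuclideanSpace ℝ (Fin n))) (x₀ : EuclideanSpace ℝ (Fin n)) : ℝ≥0∞ :=
  ∑' i : ℕ,
    (relCap p ϑ (A ∩ ball x₀ ((2 : ℝ) ^ (-(i : ℤ)))) (ball x₀ ((2 : ℝ) ^ (1 - (i : ℤ)))) /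
        relCap p ϑ (ball x₀ ((2 : ℝ) ^ (-(i : ℤ)))) (ball x₀ ((2 : ℝ) ^ (1 - (i : ℤ))))) ^
      (1 / (p x₀ - 1))

/-- The Wiener type integral `W_{p,ϑ}(A,x₀)`. -/
def wienerInt {n : ℕ} (p ϑ : EuclideanSpace ℝ (Fin n) → ℝ)
    (A : Set (EuclideanSpace ℝ (Fin n))) (x₀ : EuclideanSpace ℝ (Fin n)) : ℝ≥0∞ :=
  ∫⁻ r in Set.Ioo (0 : ℝ) 1,
    (relCap p ϑ (A ∩ ball x₀ r) (ball x₀ (2 * r)) /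
        relCap p ϑ (ball x₀ r) (ball x₀ (2 * r))) ^ (1 / (p x₀ - 1)) / ENNReal.ofReal r

/-!
Strong subadditivity `C (U ∪ V) + C (U ∩ V) ≤ C U + C V` of the capacity `C` of open sets, together
with `C (⋃ Vₘ) = sup C Vₘ` for increasing open `Vₘ` (compactness), gives continuity along increasing
sequences of arbitrary sets: choose open `Uₘ ⊇ Aₘ` with `C Uₘ ≤ cap Aₘ + εₘ`; by strong
subadditivity the finite unions `U₀ ∪ ⋯ ∪ Uₘ` exceed `cap Aₘ` by at most `ε₀ + ⋯ + εₘ`.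

Strong subadditivity reduces to compact sets. For test functions `f`, `g` of `K₁`, `K₂` and
`c > 1`, C¹ smoothings of `max (c f) (c g)` and `min (c f) (c g)` are test functions of `K₁ ∪ K₂`
and `K₁ ∩ K₂`. Their gradients are convex combinations `(1 - t) c Df + t c Dg` and
`t c Df + (1 - t) c Dg`, so convexity of `s ↦ s ^ p(x)` (`p ≥ 1`) bounds the sum of their modulars
by `c ^ p⁺` times the sum for `f` and `g`; then let `c → 1`.
-/

open Topology

structure IsSmoothRamp (ε : ℝ) (φ : ℝ → ℝ) : Prop where
  contDiff : ContDiff ℝ 1 φ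
  deriv_mem_Icc : ∀ t, deriv φ t ∈ Icc (0 : ℝ) 1
  nonneg : ∀ t, 0 ≤ φ t
  le_max : ∀ t, φ t ≤ max t 0
  sub_le : ∀ t, t - ε ≤ φ t

theorem exists_continuous_step {ε : ℝ} (hε : 0 < ε) :
    ∃ ψ : ℝ → ℝ, Continuous ψ ∧ (∀ s, ψ s ∈ Icc (0 : ℝ) 1) ∧ (∀ s ≤ 0, ψ s = 0) ∧
      ∀ s, ε ≤ s → ψ s = 1 :=
  ⟨fun s => Real.smoothTransition (s / ε),
    Real.smoothTransition.continuous.comp (continuous_id.div_const ε),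
    fun _ => ⟨Real.smoothTransition.nonneg _, Real.smoothTransition.le_one _⟩,
    fun _ hs => Real.smoothTransition.zero_of_nonpos (div_nonpos_of_nonpos_of_nonneg hs hε.le),
    fun _ hs => Real.smoothTransition.one_of_one_le ((one_le_div hε).2 hs)⟩

open intervalIntegral in
theorem exists_isSmoothRamp {ε : ℝ} (hε : 0 < ε) : ∃ φ, IsSmoothRamp ε φ := by
  obtain ⟨ψ, hψ, hψ_mem, hψ_zero, hψ_one⟩ := exists_continuous_step hε
  set φ : ℝ → ℝ := fun t => ∫ s in (0 : ℝ)..t, ψ s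
  have hφ' : ∀ t, HasDerivAt φ (ψ t) t := fun t => (hψ.integral_hasStrictDerivAt 0 t).hasDerivAt
  have hφ_mono : Monotone φ := monotone_of_hasDerivAt_nonneg hφ' fun s => (hψ_mem s).1
  have hφ_sub_mono : Monotone fun t => t - φ t :=
    monotone_of_hasDerivAt_nonneg (fun t => (hasDerivAt_id t).sub (hφ' t))
      fun s => sub_nonneg.2 (hψ_mem s).2
  have hφ_zero : ∀ t ≤ 0, φ t = 0 := fun t ht => by
    show ∫ s in (0 : ℝ)..t, ψ s = 0
    rw [integral_symm, integral_congr (g := fun _ => (0 : ℝ)), intervalIntegral.integral_zero,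
      neg_zero]
    intro s hs
    rw [uIcc_of_le ht] at hs
    exact hψ_zero s hs.2
  have hφ_nonneg : ∀ t, 0 ≤ φ t := fun t => by
    rcases le_total t 0 with ht | ht
    · exact (hφ_zero t ht).ge
    · exact (hφ_zero 0 le_rfl).symm.le.trans (hφ_mono ht)
  refine ⟨φ, ⟨?_, fun t => (hφ' t).deriv ▸ hψ_mem t, hφ_nonneg, fun t => ?_, fun t => ?_⟩⟩
  · exact contDiff_one_iff_deriv.2 ⟨fun t => (hφ' t).differentiableAt,
      by simpa only [funext fun t => (hφ' t).deriv] using hψ⟩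
  · rcases le_total t 0 with ht | ht
    · exact (hφ_zero t ht).le.trans (le_max_right _ _)
    · have := hφ_sub_mono ht
      simp only [hφ_zero 0 le_rfl, sub_zero] at this
      exact (sub_nonneg.1 this).trans (le_max_left _ _)
  · rcases le_total t ε with ht | ht
    · exact (sub_nonpos.2 ht).trans (hφ_nonneg t)
    · have hφ_incr : φ t - φ ε = t - ε := by
        show (∫ s in (0 : ℝ)..t, ψ s) - ∫ s in (0 : ℝ)..ε, ψ s = t - ε
        rw [integral_interval_sub_left (hψ.intervalIntegrable _ _) (hψ.intervalIntegrable _ _),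
          integral_congr (g := fun _ => (1 : ℝ)), intervalIntegral.integral_const, smul_eq_mul,
          mul_one]
        intro s hs
        rw [uIcc_of_le ht] at hs
        exact hψ_one s hs.1
      linarith [hφ_nonneg ε]

theorem IsSmoothRamp.map_zero {ε : ℝ} {φ : ℝ → ℝ} (hφ : IsSmoothRamp ε φ) : φ 0 = 0 :=
  le_antisymm (by simpa using hφ.le_max 0) (hφ.nonneg 0)

theorem norm_smul_add_smul_rpow_le {F : Type*} [SeminormedAddCommGroup F] [NormedSpace ℝ F]
    {q a b : ℝ} (hq : 1 ≤ q) (ha : 0 ≤ a) (hb : 0 ≤ b) (hab : a + b = 1) (u v : F) :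
    ‖a • u + b • v‖ ^ q ≤ a * ‖u‖ ^ q + b * ‖v‖ ^ q :=
  calc ‖a • u + b • v‖ ^ q ≤ (a * ‖u‖ + b * ‖v‖) ^ q := by
        refine Real.rpow_le_rpow (norm_nonneg _) ?_ (by linarith)
        refine (norm_add_le _ _).trans_eq ?_
        rw [norm_smul_of_nonneg ha, norm_smul_of_nonneg hb]
    _ ≤ a * ‖u‖ ^ q + b * ‖v‖ ^ q := by
        simpa only [smul_eq_mul] using
          (convexOn_rpow hq).2 (norm_nonneg u) (norm_nonneg v) ha hb hab

theorem norm_lineMap_rpow_add_le {F : Type*} [SeminormedAddCommGroup F] [NormedSpace ℝ F]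
    {q t : ℝ} (hq : 1 ≤ q) (ht : t ∈ Icc (0 : ℝ) 1) (u v : F) :
    ‖(1 - t) • u + t • v‖ ^ q + ‖t • u + (1 - t) • v‖ ^ q ≤ ‖u‖ ^ q + ‖v‖ ^ q := by
  have h₁ := norm_smul_add_smul_rpow_le hq (sub_nonneg.2 ht.2) ht.1 (sub_add_cancel 1 t) u v
  have h₂ := norm_smul_add_smul_rpow_le hq ht.1 (sub_nonneg.2 ht.2) (add_sub_cancel t 1) u v
  linarith

theorem tsupport_subset_union_of_eq_zero {X M : Type*} [TopologicalSpace X] [Zero M]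
    {f g h : X → M} (hfg : ∀ x, f x = 0 → g x = 0 → h x = 0) :
    tsupport h ⊆ tsupport f ∪ tsupport g := by
  rw [tsupport, tsupport, tsupport, ← closure_union]
  refine closure_mono fun x hx => ?_
  by_contra hx'
  simp only [mem_union, Function.mem_support, not_or, not_not] at hx'
  exact hx (hfg x hx'.1 hx'.2)

/-- With a ramp `φ ≈ max · 0`, `smoothMax φ f g ≈ max f g` and `smoothMin φ f g ≈ min f g`,
and the two always add up to `f + g`. -/
def smoothMax {X : Type*} (φ : ℝ → ℝ) (f g : X → ℝ) : X → ℝ := fun x => f x + φ (g x - f x)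

def smoothMin {X : Type*} (φ : ℝ → ℝ) (f g : X → ℝ) : X → ℝ := fun x => g x - φ (g x - f x)

namespace IsSmoothRamp

variable {X : Type*} {ε : ℝ} {φ : ℝ → ℝ} {f g : X → ℝ}

theorem le_smoothMax (hφ : IsSmoothRamp ε φ) (x : X) : f x ≤ smoothMax φ f g x :=
  le_add_of_nonneg_right (hφ.nonneg _)

theorem sub_le_smoothMax (hφ : IsSmoothRamp ε φ) (x : X) : g x - ε ≤ smoothMax φ f g x := by
  have := hφ.sub_le (g x - f x)
  simp only [smoothMax]
  linarith

theorem min_le_smoothMin (hφ : IsSmoothRamp ε φ) (x : X) :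
    min (f x) (g x) ≤ smoothMin φ f g x := by
  have := hφ.le_max (g x - f x)
  simp only [smoothMin]
  rcases le_total (f x) (g x) with h | h
  · rw [max_eq_left (sub_nonneg.2 h)] at this
    rw [min_eq_left h]
    linarith
  · rw [max_eq_right (sub_nonpos.2 h)] at this
    rw [min_eq_right h]
    linarith

theorem tsupport_smoothMax_subset [TopologicalSpace X] (hφ : IsSmoothRamp ε φ) :
    tsupport (smoothMax φ f g) ⊆ tsupport f ∪ tsupport g :=
  tsupport_subset_union_of_eq_zero fun x hf hg => by simp [smoothMax, hf, hg, hφ.map_zero]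

theorem tsupport_smoothMin_subset [TopologicalSpace X] (hφ : IsSmoothRamp ε φ) :
    tsupport (smoothMin φ f g) ⊆ tsupport f ∪ tsupport g :=
  tsupport_subset_union_of_eq_zero fun x hf hg => by simp [smoothMin, hf, hg, hφ.map_zero]

variable {E : Type*} [NormedAddCommGroup E] [NormedSpace ℝ E] {f g : E → ℝ}

theorem contDiff_smoothMax (hφ : IsSmoothRamp ε φ) (hf : ContDiff ℝ 1 f) (hg : ContDiff ℝ 1 g) :
    ContDiff ℝ 1 (smoothMax φ f g) :=
  hf.add (hφ.contDiff.comp (hg.sub hf))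

theorem contDiff_smoothMin (hφ : IsSmoothRamp ε φ) (hf : ContDiff ℝ 1 f) (hg : ContDiff ℝ 1 g) :
    ContDiff ℝ 1 (smoothMin φ f g) :=
  hg.sub (hφ.contDiff.comp (hg.sub hf))

theorem hasFDerivAt_smoothMax (hφ : IsSmoothRamp ε φ) {f' g' : E →L[ℝ] ℝ} {x : E}
    (hf : HasFDerivAt f f' x) (hg : HasFDerivAt g g' x) :
    HasFDerivAt (smoothMax φ f g)
      ((1 - deriv φ (g x - f x)) • f' + deriv φ (g x - f x) • g') x := by
  have hφx := (hφ.contDiff.differentiable one_ne_zero (g x - f x)).hasDerivAt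
  exact (hf.add (hφx.comp_hasFDerivAt x (hg.sub hf))).congr_fderiv (by module)

theorem hasFDerivAt_smoothMin (hφ : IsSmoothRamp ε φ) {f' g' : E →L[ℝ] ℝ} {x : E}
    (hf : HasFDerivAt f f' x) (hg : HasFDerivAt g g' x) :
    HasFDerivAt (smoothMin φ f g)
      (deriv φ (g x - f x) • f' + (1 - deriv φ (g x - f x)) • g') x := by
  have hφx := (hφ.contDiff.differentiable one_ne_zero (g x - f x)).hasDerivAt
  exact (hg.sub (hφx.comp_hasFDerivAt x (hg.sub hf))).congr_fderiv (by module)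

theorem norm_fderiv_smoothMax_rpow_add_le (hφ : IsSmoothRamp ε φ) {q : ℝ} (hq : 1 ≤ q)
    (hf : Differentiable ℝ f) (hg : Differentiable ℝ g) (x : E) :
    ‖fderiv ℝ (smoothMax φ f g) x‖ ^ q + ‖fderiv ℝ (smoothMin φ f g) x‖ ^ q ≤
      ‖fderiv ℝ f x‖ ^ q + ‖fderiv ℝ g x‖ ^ q := by
  rw [(hφ.hasFDerivAt_smoothMax (hf x).hasFDerivAt (hg x).hasFDerivAt).fderiv,
    (hφ.hasFDerivAt_smoothMin (hf x).hasFDerivAt (hg x).hasFDerivAt).fderiv]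
  exact norm_lineMap_rpow_add_le hq (hφ.deriv_mem_Icc _) _ _

end IsSmoothRamp

theorem norm_fderiv_const_smul {E : Type*} [NormedAddCommGroup E] [NormedSpace ℝ E] {f : E → ℝ}
    {c : ℝ} (hc : 0 ≤ c) (hf : Differentiable ℝ f) :
    (fun x => ‖fderiv ℝ (c • f) x‖) = c • fun x => ‖fderiv ℝ f x‖ :=
  funext fun x => by simp [fderiv_const_smul (hf x), norm_smul, abs_of_nonneg hc]

theorem le_of_forall_one_lt_le_ofReal_rpow_mul {a b : ℝ≥0∞} (P : ℝ)
    (h : ∀ c : ℝ, 1 < c → a ≤ ENNReal.ofReal (c ^ P) * b) : a ≤ b := by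
  have hlim : Tendsto (fun c : ℝ => ENNReal.ofReal (c ^ P)) (𝓝[>] 1) (𝓝 1) := by
    have := ENNReal.continuous_ofReal.continuousAt.comp
      (Real.continuousAt_rpow_const 1 P (Or.inl one_ne_zero))
    simpa [Function.comp_def] using this.tendsto.mono_left nhdsWithin_le_nhds
  have hlim' := ENNReal.Tendsto.mul_const hlim (b := b) (Or.inl one_ne_zero)
  rw [one_mul] at hlim'
  exact ge_of_tendsto hlim' (eventually_nhdsWithin_of_forall h)

section Capacity

variable {n : ℕ} {p ϑ : EuclideanSpace ℝ (Fin n) → ℝ} {P c : ℝ} {φ : ℝ → ℝ}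
  {K K' K₁ K₂ Ω : Set (EuclideanSpace ℝ (Fin n))} {f g : EuclideanSpace ℝ (Fin n) → ℝ}

def capTestFunctions (K Ω : Set (EuclideanSpace ℝ (Fin n))) :
    Set (EuclideanSpace ℝ (Fin n) → ℝ) :=
  {f | ContDiff ℝ 1 f ∧ IsCompact (tsupport f) ∧ tsupport f ⊆ Ω ∧ ∀ x ∈ K, 1 ≤ f x}

theorem relCapK_eq_iInf : relCapK p ϑ K Ω =
    ⨅ f ∈ capTestFunctions K Ω, rhoMod p ϑ Ω fun x => ‖fderiv ℝ f x‖ :=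
  sInf_image

theorem relCapK_le_rhoMod (hf : f ∈ capTestFunctions K Ω) :
    relCapK p ϑ K Ω ≤ rhoMod p ϑ Ω fun x => ‖fderiv ℝ f x‖ :=
  sInf_le (mem_image_of_mem _ hf)

theorem relCapK_mono (h : K ⊆ K') : relCapK p ϑ K Ω ≤ relCapK p ϑ K' Ω :=
  sInf_le_sInf (image_mono fun _ hf => ⟨hf.1, hf.2.1, hf.2.2.1, fun x hx => hf.2.2.2 x (h hx)⟩)

theorem rhoMod_eq_lintegral_mul (g : EuclideanSpace ℝ (Fin n) → ℝ) :
    rhoMod p ϑ Ω g = ∫⁻ x in Ω, ENNReal.ofReal (|g x| ^ p x) * ENNReal.ofReal (ϑ x) := by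
  simp only [rhoMod, ENNReal.ofReal_mul (Real.rpow_nonneg (abs_nonneg _) _)]

theorem rhoMod_const_smul_le (hc : 1 ≤ c) (hpP : ∀ᵐ x, p x ≤ P)
    (g : EuclideanSpace ℝ (Fin n) → ℝ) :
    rhoMod p ϑ Ω (c • g) ≤ ENNReal.ofReal (c ^ P) * rhoMod p ϑ Ω g := by
  simp_rw [rhoMod_eq_lintegral_mul, ← lintegral_const_mul' _ _ ENNReal.ofReal_ne_top, ← mul_assoc]
  refine lintegral_mono_ae ((ae_restrict_of_ae hpP).mono fun x hx => ?_)
  gcongr ?_ * _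
  rw [← ENNReal.ofReal_mul (by positivity), Pi.smul_apply, smul_eq_mul, abs_mul,
    abs_of_nonneg (by linarith), Real.mul_rpow (by linarith) (abs_nonneg _)]
  exact ENNReal.ofReal_le_ofReal (mul_le_mul_of_nonneg_right
    (Real.rpow_le_rpow_of_exponent_le hc hx) (by positivity))

theorem IsSmoothRamp.rhoMod_smoothMax_add_le {ε : ℝ} {φ : ℝ → ℝ} (hφ : IsSmoothRamp ε φ)
    (hp : Measurable p) (hϑ : AEMeasurable ϑ) (hp1 : ∀ᵐ x, 1 ≤ p x)
    (hf : ContDiff ℝ 1 f) (hg : ContDiff ℝ 1 g) :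
    (rhoMod p ϑ Ω fun x => ‖fderiv ℝ (smoothMax φ f g) x‖) +
        (rhoMod p ϑ Ω fun x => ‖fderiv ℝ (smoothMin φ f g) x‖) ≤
      (rhoMod p ϑ Ω fun x => ‖fderiv ℝ f x‖) + rhoMod p ϑ Ω fun x => ‖fderiv ℝ g x‖ := by
  simp only [rhoMod_eq_lintegral_mul, abs_norm]
  have hmeas : AEMeasurable (fun x => ENNReal.ofReal (‖fderiv ℝ f x‖ ^ p x) *
      ENNReal.ofReal (ϑ x)) (volume.restrict Ω) :=
    ((hf.continuous_fderiv one_ne_zero).norm.measurable.pow hp).ennreal_ofReal.aemeasurable.mul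
      hϑ.restrict.ennreal_ofReal
  refine (le_lintegral_add _ _).trans
    ((lintegral_mono_ae ?_).trans_eq (lintegral_add_left' hmeas _))
  filter_upwards [ae_restrict_of_ae hp1] with x hx
  rw [← add_mul, ← add_mul, ← ENNReal.ofReal_add (by positivity) (by positivity),
    ← ENNReal.ofReal_add (by positivity) (by positivity)]
  gcongr ENNReal.ofReal ?_ * _
  exact hφ.norm_fderiv_smoothMax_rpow_add_le hx (hf.differentiable one_ne_zero)
    (hg.differentiable one_ne_zero) x

theorem isCompact_tsupport_subset_of_subset_union (hf : f ∈ capTestFunctions K₁ Ω)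
    (hg : g ∈ capTestFunctions K₂ Ω) {u : EuclideanSpace ℝ (Fin n) → ℝ}
    (hu : tsupport u ⊆ tsupport f ∪ tsupport g) : IsCompact (tsupport u) ∧ tsupport u ⊆ Ω :=
  ⟨(hf.2.1.union hg.2.1).of_isClosed_subset (isClosed_tsupport u) hu,
    hu.trans (union_subset hf.2.2.1 hg.2.2.1)⟩

theorem IsSmoothRamp.smoothMax_mem_capTestFunctions (hφ : IsSmoothRamp (c - 1) φ) (hc : 1 ≤ c)
    (hf : f ∈ capTestFunctions K₁ Ω) (hg : g ∈ capTestFunctions K₂ Ω) :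
    smoothMax φ (c • f) (c • g) ∈ capTestFunctions (K₁ ∪ K₂) Ω := by
  have hsupp := isCompact_tsupport_subset_of_subset_union hf hg (hφ.tsupport_smoothMax_subset.trans
    (union_subset_union (tsupport_smul_subset_right (fun _ => c) f)
      (tsupport_smul_subset_right (fun _ => c) g)))
  refine ⟨hφ.contDiff_smoothMax (hf.1.const_smul c) (hg.1.const_smul c), hsupp.1, hsupp.2, ?_⟩
  rintro x (hx | hx)
  · exact (one_le_mul_of_one_le_of_one_le hc (hf.2.2.2 x hx)).trans
      (hφ.le_smoothMax (f := c • f) (g := c • g) x)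
  · calc (1 : ℝ) = c * 1 - (c - 1) := by ring
      _ ≤ c * g x - (c - 1) := by gcongr; exact hg.2.2.2 x hx
      _ ≤ smoothMax φ (c • f) (c • g) x := hφ.sub_le_smoothMax (f := c • f) (g := c • g) x

theorem IsSmoothRamp.smoothMin_mem_capTestFunctions (hφ : IsSmoothRamp (c - 1) φ) (hc : 1 ≤ c)
    (hf : f ∈ capTestFunctions K₁ Ω) (hg : g ∈ capTestFunctions K₂ Ω) :
    smoothMin φ (c • f) (c • g) ∈ capTestFunctions (K₁ ∩ K₂) Ω := by
  have hsupp := isCompact_tsupport_subset_of_subset_union hf hg (hφ.tsupport_smoothMin_subset.trans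
    (union_subset_union (tsupport_smul_subset_right (fun _ => c) f)
      (tsupport_smul_subset_right (fun _ => c) g)))
  refine ⟨hφ.contDiff_smoothMin (hf.1.const_smul c) (hg.1.const_smul c), hsupp.1, hsupp.2, ?_⟩
  rintro x ⟨hx₁, hx₂⟩
  refine le_trans ?_ (hφ.min_le_smoothMin x)
  exact le_min (one_le_mul_of_one_le_of_one_le hc (hf.2.2.2 x hx₁))
    (one_le_mul_of_one_le_of_one_le hc (hg.2.2.2 x hx₂))

theorem relCapK_union_add_inter_le_of_mem (hp : Measurable p) (hϑ : AEMeasurable ϑ)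
    (hp1 : ∀ᵐ x, 1 ≤ p x) (hpP : ∀ᵐ x, p x ≤ P) (hf : f ∈ capTestFunctions K₁ Ω)
    (hg : g ∈ capTestFunctions K₂ Ω) (hc : 1 < c) :
    relCapK p ϑ (K₁ ∪ K₂) Ω + relCapK p ϑ (K₁ ∩ K₂) Ω ≤ ENNReal.ofReal (c ^ P) *
      ((rhoMod p ϑ Ω fun x => ‖fderiv ℝ f x‖) + rhoMod p ϑ Ω fun x => ‖fderiv ℝ g x‖) := by
  obtain ⟨φ, hφ⟩ := exists_isSmoothRamp (sub_pos.2 hc)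
  have hf' := hf.1.differentiable one_ne_zero
  have hg' := hg.1.differentiable one_ne_zero
  calc relCapK p ϑ (K₁ ∪ K₂) Ω + relCapK p ϑ (K₁ ∩ K₂) Ω
      ≤ (rhoMod p ϑ Ω fun x => ‖fderiv ℝ (smoothMax φ (c • f) (c • g)) x‖) +
          rhoMod p ϑ Ω fun x => ‖fderiv ℝ (smoothMin φ (c • f) (c • g)) x‖ :=
        add_le_add (relCapK_le_rhoMod (hφ.smoothMax_mem_capTestFunctions hc.le hf hg))
          (relCapK_le_rhoMod (hφ.smoothMin_mem_capTestFunctions hc.le hf hg))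
    _ ≤ (rhoMod p ϑ Ω fun x => ‖fderiv ℝ (c • f) x‖) +
          rhoMod p ϑ Ω fun x => ‖fderiv ℝ (c • g) x‖ :=
        hφ.rhoMod_smoothMax_add_le hp hϑ hp1 (hf.1.const_smul c) (hg.1.const_smul c)
    _ ≤ _ := by
        rw [norm_fderiv_const_smul (by linarith) hf', norm_fderiv_const_smul (by linarith) hg',
          mul_add]
        exact add_le_add (rhoMod_const_smul_le hc.le hpP _) (rhoMod_const_smul_le hc.le hpP _)

theorem relCapK_union_add_inter_le (hp : Measurable p) (hϑ : AEMeasurable ϑ)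
    (hp1 : ∀ᵐ x, 1 ≤ p x) (hpP : ∀ᵐ x, p x ≤ P) :
    relCapK p ϑ (K₁ ∪ K₂) Ω + relCapK p ϑ (K₁ ∩ K₂) Ω ≤ relCapK p ϑ K₁ Ω + relCapK p ϑ K₂ Ω := by
  rw [relCapK_eq_iInf (K := K₁), relCapK_eq_iInf (K := K₂)]
  exact ENNReal.le_iInf₂_add_iInf₂ fun f hf g hg => le_of_forall_one_lt_le_ofReal_rpow_mul P
    fun c hc => relCapK_union_add_inter_le_of_mem hp hϑ hp1 hpP hf hg hc

end Capacity

section OpenCapacity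

variable {n : ℕ} {p ϑ : EuclideanSpace ℝ (Fin n) → ℝ} {P : ℝ}
  {K U V Ω : Set (EuclideanSpace ℝ (Fin n))}

theorem relCapK_le_relCapO (hK : IsCompact K) (hKU : K ⊆ U) :
    relCapK p ϑ K Ω ≤ relCapO p ϑ U Ω :=
  le_iSup₂ (f := fun K (_ : IsCompact K ∧ K ⊆ U) => relCapK p ϑ K Ω) K ⟨hK, hKU⟩

theorem relCapO_union_add_inter_le (hp : Measurable p) (hϑ : AEMeasurable ϑ)
    (hp1 : ∀ᵐ x, 1 ≤ p x) (hpP : ∀ᵐ x, p x ≤ P) (hU : IsOpen U) (hV : IsOpen V) :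
    relCapO p ϑ (U ∪ V) Ω + relCapO p ϑ (U ∩ V) Ω ≤ relCapO p ϑ U Ω + relCapO p ϑ V Ω := by
  refine ENNReal.biSup_add_biSup_le' ⟨∅, isCompact_empty, empty_subset _⟩
    ⟨∅, isCompact_empty, empty_subset _⟩ fun K hK L hL => ?_
  obtain ⟨K₁, K₂, hK₁, hK₂, hK₁U, hK₂V, rfl⟩ := hK.1.binary_compact_cover hU hV hK.2
  calc relCapK p ϑ (K₁ ∪ K₂) Ω + relCapK p ϑ L Ω
      ≤ relCapK p ϑ ((K₁ ∪ L) ∪ (K₂ ∪ L)) Ω + relCapK p ϑ ((K₁ ∪ L) ∩ (K₂ ∪ L)) Ω :=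
        add_le_add (relCapK_mono (union_subset_union subset_union_left subset_union_left))
          (relCapK_mono (subset_inter subset_union_right subset_union_right))
    _ ≤ relCapK p ϑ (K₁ ∪ L) Ω + relCapK p ϑ (K₂ ∪ L) Ω :=
        relCapK_union_add_inter_le hp hϑ hp1 hpP
    _ ≤ relCapO p ϑ U Ω + relCapO p ϑ V Ω :=
        add_le_add
          (relCapK_le_relCapO (hK₁.union hL.1) (union_subset hK₁U (hL.2.trans inter_subset_left)))
          (relCapK_le_relCapO (hK₂.union hL.1) (union_subset hK₂V (hL.2.trans inter_subset_right)))

theorem relCapO_iUnion_le_iSup {V : ℕ → Set (EuclideanSpace ℝ (Fin n))}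
    (hV : ∀ m, IsOpen (V m)) (hVmono : Monotone V) :
    relCapO p ϑ (⋃ m, V m) Ω ≤ ⨆ m, relCapO p ϑ (V m) Ω :=
  iSup₂_le fun K hK => by
    obtain ⟨m, hm⟩ := hK.1.elim_directed_cover V hV hK.2 hVmono.directed_le
    exact (relCapK_le_relCapO hK.1 hm).trans (le_iSup (fun m => relCapO p ϑ (V m) Ω) m)

end OpenCapacity

section OuterCapacity

variable {X : Type*} [TopologicalSpace X]

/-- `relCap p ϑ A Ω` is `outerCap (relCapO p ϑ · Ω) Ω A`. -/
def outerCap (C : Set X → ℝ≥0∞) (Ω A : Set X) : ℝ≥0∞ :=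
  ⨅ (U : Set X) (_ : IsOpen U ∧ A ⊆ U ∧ U ⊆ Ω), C U

variable {C : Set X → ℝ≥0∞} {Ω A B U : Set X}

theorem outerCap_le (hU : IsOpen U) (hAU : A ⊆ U) (hUΩ : U ⊆ Ω) : outerCap C Ω A ≤ C U :=
  iInf₂_le U ⟨hU, hAU, hUΩ⟩

theorem outerCap_mono (h : A ⊆ B) : outerCap C Ω A ≤ outerCap C Ω B :=
  le_iInf₂ fun _ hU => outerCap_le hU.1 (h.trans hU.2.1) hU.2.2

theorem exists_isOpen_le_outerCap_add (h : outerCap C Ω A ≠ ⊤) {e : ℝ≥0∞} (he : e ≠ 0) :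
    ∃ U, (IsOpen U ∧ A ⊆ U ∧ U ⊆ Ω) ∧ C U ≤ outerCap C Ω A + e := by
  obtain ⟨U, hU⟩ := iInf_lt_iff.1 (ENNReal.lt_add_right h he)
  obtain ⟨hUA, hlt⟩ := iInf_lt_iff.1 hU
  exact ⟨U, hUA, hlt.le⟩

/-- Gluing the near-optimal open neighbourhoods `U k ⊇ A k` costs at most the sum of the errors,
because `U (m + 1)` and `U 0 ∪ ⋯ ∪ U m` both contain `A m`. -/
theorem apply_accumulate_le_outerCap_add
    (hsub : ∀ U V, IsOpen U → IsOpen V → C (U ∪ V) + C (U ∩ V) ≤ C U + C V)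
    {A U : ℕ → Set X} (hA : Monotone A) (hfin : ∀ m, outerCap C Ω (A m) ≠ ⊤)
    (hU : ∀ m, IsOpen (U m) ∧ A m ⊆ U m ∧ U m ⊆ Ω) {e : ℕ → ℝ≥0∞}
    (hUe : ∀ m, C (U m) ≤ outerCap C Ω (A m) + e m) (m : ℕ) :
    C (accumulate U m) ≤ outerCap C Ω (A m) + ∑ k ∈ Finset.range (m + 1), e k := by
  induction m with
  | zero => simpa using hUe 0
  | succ m ih =>
    have hW : IsOpen (accumulate U m) := isOpen_biUnion fun k _ => (hU k).1
    have hWΩ : accumulate U m ∩ U (m + 1) ⊆ Ω := inter_subset_right.trans (hU (m + 1)).2.2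
    have hAW : A m ⊆ accumulate U m ∩ U (m + 1) :=
      subset_inter ((hU m).2.1.trans (subset_accumulate (x := m)))
        ((hA m.le_succ).trans (hU (m + 1)).2.1)
    refine (ENNReal.add_le_add_iff_right (hfin m)).1 ?_
    calc C (accumulate U (m + 1)) + outerCap C Ω (A m)
        ≤ C (accumulate U m ∪ U (m + 1)) + C (accumulate U m ∩ U (m + 1)) := by
          rw [accumulate_succ]
          exact add_le_add_right (outerCap_le (hW.inter (hU (m + 1)).1) hAW hWΩ) _
      _ ≤ C (accumulate U m) + C (U (m + 1)) := hsub _ _ hW (hU (m + 1)).1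
      _ ≤ (outerCap C Ω (A m) + ∑ k ∈ Finset.range (m + 1), e k) +
            (outerCap C Ω (A (m + 1)) + e (m + 1)) := add_le_add ih (hUe (m + 1))
      _ = (outerCap C Ω (A (m + 1)) + ∑ k ∈ Finset.range (m + 2), e k) +
            outerCap C Ω (A m) := by
          rw [Finset.sum_range_succ _ (m + 1)]
          ring

theorem outerCap_iUnion_le_iSup
    (hsub : ∀ U V, IsOpen U → IsOpen V → C (U ∪ V) + C (U ∩ V) ≤ C U + C V)
    (hcont : ∀ V : ℕ → Set X, (∀ m, IsOpen (V m)) → Monotone V → C (⋃ m, V m) ≤ ⨆ m, C (V m))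
    {A : ℕ → Set X} (hA : Monotone A) :
    outerCap C Ω (⋃ m, A m) ≤ ⨆ m, outerCap C Ω (A m) := by
  by_cases htop : ⨆ m, outerCap C Ω (A m) = ⊤
  · exact htop ▸ le_top
  have hfin : ∀ m, outerCap C Ω (A m) ≠ ⊤ := fun m =>
    ne_top_of_le_ne_top htop (le_iSup (fun m => outerCap C Ω (A m)) m)
  refine ENNReal.le_of_forall_pos_le_add fun η hη _ => ?_
  obtain ⟨e, he, hesum⟩ := ENNReal.exists_pos_sum_of_countable' (ENNReal.coe_ne_zero.2 hη.ne') ℕ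
  choose U hU hUe using fun m => exists_isOpen_le_outerCap_add (hfin m) (he m).ne'
  have hW : ∀ m, IsOpen (accumulate U m) := fun m => isOpen_biUnion fun k _ => (hU k).1
  calc outerCap C Ω (⋃ m, A m)
      ≤ C (⋃ m, accumulate U m) :=
        outerCap_le (isOpen_iUnion hW)
          (iUnion_mono fun m => (hU m).2.1.trans (subset_accumulate (x := m)))
          (iUnion_subset fun m => iUnion₂_subset fun k _ => (hU k).2.2)
    _ ≤ ⨆ m, C (accumulate U m) := hcont _ hW monotone_accumulate
    _ ≤ ⨆ m, (outerCap C Ω (A m) + η) := iSup_mono fun m =>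
        (apply_accumulate_le_outerCap_add hsub hA hfin hU hUe m).trans
          (add_le_add_right ((ENNReal.sum_le_tsum _).trans hesum.le) _)
    _ = (⨆ m, outerCap C Ω (A m)) + η := (ENNReal.iSup_add _).symm

theorem tendsto_outerCap_iUnion
    (hsub : ∀ U V, IsOpen U → IsOpen V → C (U ∪ V) + C (U ∩ V) ≤ C U + C V)
    (hcont : ∀ V : ℕ → Set X, (∀ m, IsOpen (V m)) → Monotone V → C (⋃ m, V m) ≤ ⨆ m, C (V m))
    {A : ℕ → Set X} (hA : Monotone A) :
    Tendsto (fun m => outerCap C Ω (A m)) atTop (𝓝 (outerCap C Ω (⋃ m, A m))) := by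
  have hmono : Monotone fun m => outerCap C Ω (A m) := fun _ _ h => outerCap_mono (hA h)
  rw [le_antisymm (outerCap_iUnion_le_iSup hsub hcont hA)
    (iSup_le fun m => outerCap_mono (subset_iUnion A m))]
  exact tendsto_atTop_iSup hmono

end OuterCapacity

-- For `f` unbounded below, `essInf f μ` is the junk value `0`.
theorem isBoundedUnder_ge_of_nonneg_lt_essInf {α : Type*} [MeasurableSpace α] {μ : Measure α}
    {f : α → ℝ} {a : ℝ} (ha : 0 ≤ a) (h : a < essInf f μ) : IsBoundedUnder (· ≥ ·) (ae μ) f := by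
  by_contra hf
  exact (h.trans_eq (Real.liminf_of_not_isBoundedUnder hf)).not_ge ha

theorem stmt5_general (n : ℕ) (p ϑ : EuclideanSpace ℝ (Fin n) → ℝ)
    (hp : Measurable p)
    (hpm : 1 < essInf p (volume : Measure (EuclideanSpace ℝ (Fin n))))
    (hpb : Filter.IsBoundedUnder (· ≤ ·) (ae (volume : Measure (EuclideanSpace ℝ (Fin n)))) p)
    (hϑloc : LocallyIntegrable ϑ (volume : Measure (EuclideanSpace ℝ (Fin n))))
    (Ω : Set (EuclideanSpace ℝ (Fin n))) (A : ℕ → Set (EuclideanSpace ℝ (Fin n)))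
    (hinc : ∀ m, A m ⊆ A (m + 1)) :
    Filter.Tendsto (fun m => relCap p ϑ (A m) Ω) Filter.atTop
      (nhds (relCap p ϑ (⋃ m, A m) Ω)) := by
  obtain ⟨P, hpP⟩ : ∃ P, ∀ᵐ x, p x ≤ P := hpb
  have hp1 : ∀ᵐ x, 1 ≤ p x := (ae_lt_of_lt_essInf hpm
    (isBoundedUnder_ge_of_nonneg_lt_essInf zero_le_one hpm)).mono fun _ hx => hx.le
  have hϑ : AEMeasurable ϑ := hϑloc.aestronglyMeasurable.aemeasurable
  exact tendsto_outerCap_iUnion (C := (relCapO p ϑ · Ω))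
    (fun _ _ hU hV => relCapO_union_add_inter_le hp hϑ hp1 hpP hU hV)
    (fun _ hV hVmono => relCapO_iUnion_le_iSup hV hVmono) (monotone_nat_of_le_succ hinc)

/-- For an increasing sequence of subsets of `Ω`, the relative capacities converge
to the relative capacity of the union. -/
theorem stmt5 (n : ℕ) (hn : 1 ≤ n) (p ϑ : EuclideanSpace ℝ (Fin n) → ℝ)
    (hp : Measurable p)
    (hpm : 1 < essInf p (volume : Measure (EuclideanSpace ℝ (Fin n))))
    (hpb : Filter.IsBoundedUnder (· ≤ ·) (ae (volume : Measure (EuclideanSpace ℝ (Fin n)))) p)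
    (hϑpos : ∀ x, 0 < ϑ x)
    (hϑloc : LocallyIntegrable ϑ (volume : Measure (EuclideanSpace ℝ (Fin n))))
    (Ω : Set (EuclideanSpace ℝ (Fin n))) (hΩ : IsOpen Ω) (A : ℕ → Set (EuclideanSpace ℝ (Fin n)))
    (hAΩ : ∀ m, A m ⊆ Ω) (hinc : ∀ m, A m ⊆ A (m + 1)) :
    Filter.Tendsto (fun m => relCap p ϑ (A m) Ω) Filter.atTop
      (nhds (relCap p ϑ (⋃ m, A m) Ω)) :=
  stmt5_general n p ϑ hp hpm hpb hϑloc Ω A hinc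

end
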